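/- Guarded string languages form a Kleene algebra with tests: the Kleene elements are sets of guarded strings with language concatenation (via partial guarded-string concatenation), union, Kleene star (iterated concatenation), the set of all single-atom strings as 1, and ∅ as 0; the tests are sets of atoms (as Boolean functions At → bool) with pointwise Boolean operations; a set of atoms a is embedded as the language of single-atom strings {α | α ∈ a}. -/

import Mathlib

structure IsKleeneAlgebra {X : Type*} (add mul : X → X → X) (star : X → X)
    (one zero : X) : Prop where
  add_assoc : ∀ x y z, add (add x y) z = add x (add y z)
  add_comm : ∀ x y, add x y = add y x
  add_idem : ∀ x, add x x = x
  add_zero : ∀ x, add x zero = x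
  mul_assoc : ∀ x y z, mul (mul x y) z = mul x (mul y z)
  one_mul : ∀ x, mul one x = x
  mul_one : ∀ x, mul x one = x
  zero_mul : ∀ x, mul zero x = zero
  mul_zero : ∀ x, mul x zero = zero
  left_distrib : ∀ x y z, mul x (add y z) = add (mul x y) (mul x z)
  right_distrib : ∀ x y z, mul (add x y) z = add (mul x z) (mul y z)
  star_unfold : ∀ x, add (add one (mul x (star x))) (star x) = star x
  star_ind_left : ∀ x y, add (mul y x) x = x → add (mul (star y) x) x = x
  star_ind_right : ∀ x y, add (mul x y) x = x → add (mul x (star y)) x = x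

structure IsBooleanAlgebra {B : Type*} (and or : B → B → B) (not : B → B)
    (top bot : B) : Prop where
  and_comm : ∀ a b, and a b = and b a
  or_comm : ∀ a b, or a b = or b a
  and_or_distrib : ∀ a b c, and a (or b c) = or (and a b) (and a c)
  or_and_distrib : ∀ a b c, or a (and b c) = and (or a b) (or a c)
  and_top : ∀ a, and a top = a
  or_bot : ∀ a, or a bot = a
  and_compl : ∀ a, and a (not a) = bot
  or_compl : ∀ a, or a (not a) = top

/-- Guarded strings: an atom followed by a list of (letter, atom) pairs. -/
def GString (At A : Type*) := At × List (A × At)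

def GString.lastAtom {At A : Type*} (u : GString At A) : At :=
  (u.2.map Prod.snd).getLastD u.1

/-- Partial concatenation of guarded strings. -/
def GString.cat {At A : Type*} [DecidableEq At] (u v : GString At A) :
    Option (GString At A) :=
  if u.lastAtom = v.1 then some (u.1, u.2 ++ v.2) else none

/-- Concatenation of guarded string languages. -/
def glangCat {At A : Type*} [DecidableEq At] (x y : Set (GString At A)) :
    Set (GString At A) :=
  {w | ∃ u ∈ x, ∃ v ∈ y, u.cat v = some w}

/-- The unit language: all single-atom strings. -/
def glangOne (At A : Type*) : Set (GString At A) := {u | u.2 = []}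

/-- n-fold concatenation of a guarded string language. -/
def glangPow {At A : Type*} [DecidableEq At] (x : Set (GString At A)) :
    ℕ → Set (GString At A)
  | 0 => glangOne At A
  | n + 1 => glangCat x (glangPow x n)

/-- Kleene star of a guarded string language: iterated concatenation. -/
def glangStar {At A : Type*} [DecidableEq At] (x : Set (GString At A)) :
    Set (GString At A) :=
  ⋃ n : ℕ, glangPow x n

/-- Embedding of a set of atoms as a language of single-atom strings. -/
def glangTest {At A : Type*} (a : At → Bool) : Set (GString At A) :=
  {u | u.2 = [] ∧ a u.1 = true}

/-!
Guarded strings under partial concatenation behave like the arrows of a category whose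
objects are atoms: concatenation is associative wherever defined (`GString.cat_bind_cat`) and
the single-atom strings are local units. Hence languages, under pointwise concatenation, satisfy
the semiring laws with `glangOne` as unit, and concatenation commutes with arbitrary unions.
Since the star is the union of the powers, the star axioms reduce to statements about each
power. On languages of single-atom strings concatenation is intersection, so
the embedding of tests sends `&&` to concatenation and `||` to union.
-/

theorem BooleanAlgebra.isBooleanAlgebra (B : Type*) [BooleanAlgebra B] :
    IsBooleanAlgebra (· ⊓ · : B → B → B) (· ⊔ ·) compl ⊤ ⊥ :=
  ⟨inf_comm, sup_comm, inf_sup_left, sup_inf_left, inf_top_eq, sup_bot_eq,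
    fun _ => inf_compl_eq_bot, fun _ => sup_compl_eq_top⟩

namespace GString

variable {At A : Type*}

theorem lastAtom_append (u : GString At A) (l : List (A × At)) :
    lastAtom (u.1, u.2 ++ l) = lastAtom (u.lastAtom, l) := by
  simp only [lastAtom, List.map_append, List.getLastD_eq_getLast?, List.getLast?_append]
  cases (l.map Prod.snd).getLast? <;> rfl

theorem lastAtom_of_snd_eq_nil {u : GString At A} (h : u.2 = []) : u.lastAtom = u.1 := by
  simp [lastAtom, h]

variable [DecidableEq At]

theorem cat_eq_some_iff {u v w : GString At A} :
    u.cat v = some w ↔ u.lastAtom = v.1 ∧ (u.1, u.2 ++ v.2) = w := by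
  unfold cat
  split_ifs with h
  · exact Option.some_inj.trans (and_iff_right h).symm
  · simp [h]

theorem cat_bind_cat (u v q : GString At A) :
    (u.cat v).bind (·.cat q) = (v.cat q).bind u.cat := by
  refine Option.ext fun w => ?_
  simp only [Option.bind_eq_some_iff, cat_eq_some_iff]
  constructor
  · rintro ⟨_, ⟨huv, rfl⟩, hvq, rfl⟩
    rw [lastAtom_append, huv] at hvq
    exact ⟨_, ⟨hvq, rfl⟩, huv, by simp⟩
  · rintro ⟨_, ⟨hvq, rfl⟩, huv, rfl⟩
    refine ⟨_, ⟨huv, rfl⟩, ?_, by simp⟩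
    rw [lastAtom_append, huv]
    exact hvq

theorem cat_lastAtom_nil (u : GString At A) : u.cat (u.lastAtom, []) = some u :=
  cat_eq_some_iff.2 ⟨rfl, Prod.ext rfl (List.append_nil _)⟩

theorem fst_nil_cat (v : GString At A) : GString.cat (v.1, []) v = some v :=
  cat_eq_some_iff.2 ⟨rfl, rfl⟩

theorem cat_self_of_snd_eq_nil {u : GString At A} (h : u.2 = []) : u.cat u = some u :=
  cat_eq_some_iff.2 ⟨lastAtom_of_snd_eq_nil h, Prod.ext rfl (by simp [h])⟩

theorem eq_left_of_cat_eq_some {u v w : GString At A} (hv : v.2 = [])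
    (h : u.cat v = some w) : w = u := by
  obtain ⟨-, rfl⟩ := cat_eq_some_iff.1 h
  exact Prod.ext rfl (by simp [hv])

theorem eq_right_of_cat_eq_some {u v w : GString At A} (hu : u.2 = [])
    (h : u.cat v = some w) : w = v := by
  obtain ⟨huv, rfl⟩ := cat_eq_some_iff.1 h
  rw [hu, List.nil_append, ← lastAtom_of_snd_eq_nil hu, huv]
  rfl

end GString

section Languages

variable {At A : Type*} [DecidableEq At]

theorem glangCat_assoc (x y z : Set (GString At A)) :
    glangCat (glangCat x y) z = glangCat x (glangCat y z) := by
  ext w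
  constructor
  · rintro ⟨p, ⟨u, hu, v, hv, huv⟩, q, hq, hpq⟩
    have : (v.cat q).bind u.cat = some w := by
      rw [← GString.cat_bind_cat, huv]
      exact hpq
    obtain ⟨r, hvq, hur⟩ := Option.bind_eq_some_iff.1 this
    exact ⟨u, hu, r, ⟨v, hv, q, hq, hvq⟩, hur⟩
  · rintro ⟨u, hu, r, ⟨v, hv, q, hq, hvq⟩, hur⟩
    have : (u.cat v).bind (·.cat q) = some w := by
      rw [GString.cat_bind_cat, hvq]
      exact hur
    obtain ⟨p, huv, hpq⟩ := Option.bind_eq_some_iff.1 this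
    exact ⟨p, ⟨u, hu, v, hv, huv⟩, q, hq, hpq⟩

theorem glangOne_glangCat (x : Set (GString At A)) : glangCat (glangOne At A) x = x := by
  ext w
  constructor
  · rintro ⟨u, hu, v, hv, huv⟩
    rwa [GString.eq_right_of_cat_eq_some hu huv]
  · exact fun hw => ⟨(w.1, []), rfl, w, hw, GString.fst_nil_cat w⟩

theorem glangCat_glangOne (x : Set (GString At A)) : glangCat x (glangOne At A) = x := by
  ext w
  constructor
  · rintro ⟨u, hu, v, hv, huv⟩
    rwa [GString.eq_left_of_cat_eq_some hv huv]
  · exact fun hw => ⟨w, hw, (w.lastAtom, []), rfl, GString.cat_lastAtom_nil w⟩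

theorem empty_glangCat (x : Set (GString At A)) : glangCat ∅ x = ∅ := by
  simp [glangCat]

theorem glangCat_empty (x : Set (GString At A)) : glangCat x ∅ = ∅ := by
  simp [glangCat]

theorem glangCat_iUnion {ι : Sort*} (x : Set (GString At A)) (y : ι → Set (GString At A)) :
    glangCat x (⋃ i, y i) = ⋃ i, glangCat x (y i) := by
  ext w
  simp only [glangCat, Set.mem_iUnion, Set.mem_ofPred_eq]
  aesop

theorem iUnion_glangCat {ι : Sort*} (x : ι → Set (GString At A)) (y : Set (GString At A)) :
    glangCat (⋃ i, x i) y = ⋃ i, glangCat (x i) y := by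
  ext w
  simp only [glangCat, Set.mem_iUnion, Set.mem_ofPred_eq]
  aesop

theorem glangCat_union (x y z : Set (GString At A)) :
    glangCat x (y ∪ z) = glangCat x y ∪ glangCat x z := by
  ext w
  simp only [glangCat, Set.mem_union, Set.mem_ofPred_eq]
  aesop

theorem union_glangCat (x y z : Set (GString At A)) :
    glangCat (x ∪ y) z = glangCat x z ∪ glangCat y z := by
  ext w
  simp only [glangCat, Set.mem_union, Set.mem_ofPred_eq]
  aesop

theorem glangCat_mono {x x' y y' : Set (GString At A)} (hx : x ⊆ x') (hy : y ⊆ y') :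
    glangCat x y ⊆ glangCat x' y' := by
  rintro w ⟨u, hu, v, hv, huv⟩
  exact ⟨u, hx hu, v, hy hv, huv⟩

theorem glangPow_succ' (x : Set (GString At A)) (n : ℕ) :
    glangPow x (n + 1) = glangCat (glangPow x n) x := by
  induction n with
  | zero => exact (glangCat_glangOne x).trans (glangOne_glangCat x).symm
  | succ n ih =>
    show glangCat x (glangPow x (n + 1)) = glangCat (glangCat x (glangPow x n)) x
    rw [ih, glangCat_assoc]

theorem glangOne_subset_glangStar (x : Set (GString At A)) : glangOne At A ⊆ glangStar x :=
  Set.subset_iUnion (glangPow x) 0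

theorem glangCat_self_glangStar_subset (x : Set (GString At A)) :
    glangCat x (glangStar x) ⊆ glangStar x := by
  rw [glangStar, glangCat_iUnion]
  exact Set.iUnion_subset fun n => Set.subset_iUnion (glangPow x) (n + 1)

theorem glangStar_glangCat_subset {x y : Set (GString At A)} (h : glangCat y x ⊆ x) :
    glangCat (glangStar y) x ⊆ x := by
  rw [glangStar, iUnion_glangCat]
  refine Set.iUnion_subset fun n => ?_
  induction n with
  | zero => rw [glangPow, glangOne_glangCat]
  | succ n ih =>
    rw [glangPow, glangCat_assoc]
    exact (glangCat_mono Set.Subset.rfl ih).trans h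

theorem glangCat_glangStar_subset {x y : Set (GString At A)} (h : glangCat x y ⊆ x) :
    glangCat x (glangStar y) ⊆ x := by
  rw [glangStar, glangCat_iUnion]
  refine Set.iUnion_subset fun n => ?_
  induction n with
  | zero => rw [glangPow, glangCat_glangOne]
  | succ n ih =>
    rw [glangPow_succ', ← glangCat_assoc]
    exact (glangCat_mono ih Set.Subset.rfl).trans h

theorem glang_isKleeneAlgebra :
    IsKleeneAlgebra (X := Set (GString At A)) (· ∪ ·) glangCat glangStar
      (glangOne At A) ∅ where
  add_assoc := Set.union_assoc
  add_comm := Set.union_comm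
  add_idem := Set.union_self
  add_zero := Set.union_empty
  mul_assoc := glangCat_assoc
  one_mul := glangOne_glangCat
  mul_one := glangCat_glangOne
  zero_mul := empty_glangCat
  mul_zero := glangCat_empty
  left_distrib := glangCat_union
  right_distrib := union_glangCat
  star_unfold x := Set.union_eq_right.2 <|
    Set.union_subset (glangOne_subset_glangStar x) (glangCat_self_glangStar_subset x)
  star_ind_left _ _ h :=
    Set.union_eq_right.2 <| glangStar_glangCat_subset <| Set.union_eq_right.1 h
  star_ind_right _ _ h :=
    Set.union_eq_right.2 <| glangCat_glangStar_subset <| Set.union_eq_right.1 h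

theorem glangCat_eq_inter {x y : Set (GString At A)} (hx : x ⊆ glangOne At A)
    (hy : y ⊆ glangOne At A) : glangCat x y = x ∩ y := by
  ext w
  constructor
  · rintro ⟨u, hu, v, hv, huv⟩
    obtain rfl := GString.eq_right_of_cat_eq_some (hx hu) huv
    obtain rfl := GString.eq_left_of_cat_eq_some (hy hv) huv
    exact ⟨hu, hv⟩
  · exact fun ⟨hwx, hwy⟩ => ⟨w, hwx, w, hwy, GString.cat_self_of_snd_eq_nil (hx hwx)⟩

end Languages

section Tests

variable {At A : Type*}

theorem glangTest_and [DecidableEq At] (a b : At → Bool) :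
    glangTest (A := A) (fun α => a α && b α) = glangCat (glangTest a) (glangTest b) := by
  rw [glangCat_eq_inter (fun _ h => h.1) (fun _ h => h.1)]
  ext w
  simp only [glangTest, Set.mem_inter_iff, Set.mem_ofPred_eq, Bool.and_eq_true]
  tauto

theorem glangTest_or (a b : At → Bool) :
    glangTest (A := A) (fun α => a α || b α) = glangTest a ∪ glangTest b := by
  ext w
  simp only [glangTest, Set.mem_union, Set.mem_ofPred_eq, Bool.or_eq_true]
  tauto

theorem glangTest_true : glangTest (A := A) (fun _ : At => true) = glangOne At A := by
  simp [glangTest, glangOne]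

theorem glangTest_false : glangTest (A := A) (fun _ : At => false) = ∅ := by
  simp [glangTest]

end Tests

theorem glang_isKAT (At A : Type*) [DecidableEq At] :
    IsKleeneAlgebra (X := Set (GString At A)) (· ∪ ·) glangCat glangStar
        (glangOne At A) ∅
    ∧ IsBooleanAlgebra (B := At → Bool)
        (fun a b α => a α && b α) (fun a b α => a α || b α) (fun a α => !a α)
        (fun _ => true) (fun _ => false)
    ∧ (∀ a b : At → Bool,
        glangTest (A := A) (fun α => a α && b α) = glangCat (glangTest a) (glangTest b))
    ∧ (∀ a b : At → Bool,
        glangTest (A := A) (fun α => a α || b α) = glangTest a ∪ glangTest b)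
    ∧ glangTest (A := A) (fun _ : At => true) = glangOne At A
    ∧ glangTest (A := A) (fun _ : At => false) = (∅ : Set (GString At A)) :=
  ⟨glang_isKleeneAlgebra, BooleanAlgebra.isBooleanAlgebra (At → Bool), glangTest_and,
    glangTest_or, glangTest_true, glangTest_false⟩
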